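/- Fix γ ∈ (0,1) and μ > 0. Let g_0 : ℝ → ℝ ∪ {−∞} satisfy sup g_0 = γ, and define recursively for n ≥ 1: p_n(x) = π[ 1 − γ + sup_{y∈ℝ} ( g_{n−1}(y) − min(1,μ)·max(x − y, 0) ) ], s_n = sup{ x ∈ ℝ : p_n(x) ≥ γ }, and g_n = π ∘ Φ_{s_n}[g_{n−1}]. Then for all n ≥ 1 one has s_n = sup{ ξ ∈ ℝ : sup_{x∈ℝ} Φ_ξ[g_{n−1}](x) ≥ γ } and g_n = π ∘ Φ_{s_n}[g_{n−1}]. -/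

import Mathlib

/-- `π(x) = x` if `x ≥ 0`, and `−∞` otherwise. -/
noncomputable def piE (x : EReal) : EReal := if 0 ≤ x then x else ⊥

/-- `Φ_ξ[g](x) = 1 − γ + sup_y ( g(y) − |x − y| ) − μ·max(ξ − x, 0)`. -/
noncomputable def Phi (γ μ : ℝ) (g : ℝ → EReal) (ξ x : ℝ) : EReal :=
  ((1 - γ : ℝ) : EReal) + (⨆ y : ℝ, g y - ((|x - y| : ℝ) : EReal))
    - ((μ * max (ξ - x) 0 : ℝ) : EReal)

/-- The phenotypic profile
`p(x) = π[ 1 − γ + sup_y ( g(y) − min(1,μ)·max(x − y, 0) ) ]`. -/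
noncomputable def pFun (γ μ : ℝ) (g : ℝ → EReal) (x : ℝ) : EReal :=
  piE (((1 - γ : ℝ) : EReal) +
    ⨆ y : ℝ, g y - ((min 1 μ * max (x - y) 0 : ℝ) : EReal))

/-- The phenotypic threshold `s = sup{ x ∈ ℝ : p(x) ≥ γ }` built from a
genotypic profile `g`. -/
noncomputable def sFun (γ μ : ℝ) (g : ℝ → EReal) : ℝ :=
  sSup {ξ : ℝ | (γ : EReal) ≤ pFun γ μ g ξ}

/-- The recursive dynamic: `g_n = π ∘ Φ_{s_n}[g_{n−1}]` where
`s_n = sup{ x : p_n(x) ≥ γ }` and `p_n = pFun γ μ g_{n−1}`. -/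
noncomputable def gseq (γ μ : ℝ) (g0 : ℝ → EReal) : ℕ → ℝ → EReal
  | 0 => g0
  | n + 1 => fun x =>
      piE (Phi γ μ (gseq γ μ g0 n) (sFun γ μ (gseq γ μ g0 n)) x)

/-!
Exchanging the two suprema, `sup_x Φ_ξ[g](x) = 1 − γ + sup_y (g(y) − c(y))`, where
`c(y) = min_x (|x − y| + μ·max(ξ − x, 0)) = min(1, μ)·max(ξ − y, 0)`, the minimum being attained
at `x = y` or at `x = ξ`. So `sup_x Φ_ξ[g_{n−1}]` is the argument of `π` in `p_n(ξ)`, and since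
`γ ≥ 0`, applying `π` does not change whether it is `≥ γ`.
-/

theorem EReal.coe_add_iSup {ι : Sort*} (c : ℝ) (f : ι → EReal) :
    (c : EReal) + ⨆ i, f i = ⨆ i, ((c : EReal) + f i) :=
  Monotone.map_iSup_of_continuousAt (f := ((c : EReal) + ·))
    ((EReal.continuousAt_add (Or.inl (EReal.coe_ne_top c)) (Or.inl (EReal.coe_ne_bot c))).comp
      (Continuous.prodMk continuous_const continuous_id).continuousAt)
    (fun _ _ h => add_le_add_right h _) (by simp)

theorem EReal.iSup_sub_coe {ι : Sort*} (f : ι → EReal) (c : ℝ) :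
    (⨆ i, f i) - (c : EReal) = ⨆ i, (f i - (c : EReal)) := by
  simp only [sub_eq_add_neg, ← EReal.coe_neg, add_comm _ ((-c : ℝ) : EReal)]
  exact EReal.coe_add_iSup (-c) f

theorem EReal.iSup_sub_coe_of_isLeast {ι : Sort*} {a : EReal} {r : ι → ℝ} {R : ℝ}
    (hR : IsLeast (Set.range r) R) :
    ⨆ i, a - (r i : EReal) = a - (R : EReal) := by
  obtain ⟨⟨i, rfl⟩, hlb⟩ := hR
  exact le_antisymm
    (iSup_le fun j => EReal.sub_le_sub le_rfl (EReal.coe_le_coe_iff.2 (hlb ⟨j, rfl⟩)))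
    (le_iSup (fun j => a - (r j : EReal)) i)

theorem isLeast_abs_sub_add_mul_max_sub {μ : ℝ} (hμ : 0 ≤ μ) (ξ y : ℝ) :
    IsLeast (Set.range fun x => |x - y| + μ * max (ξ - x) 0) (min 1 μ * max (ξ - y) 0) := by
  refine ⟨?_, ?_⟩
  · rcases le_total μ 1 with hμ1 | hμ1
    · exact ⟨y, by simp [min_eq_right hμ1]⟩
    rcases le_total ξ y with hξ | hξ
    · exact ⟨y, by simp [hξ]⟩
    · exact ⟨ξ, by simp [min_eq_left hμ1, abs_of_nonneg (sub_nonneg.2 hξ), hξ]⟩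
  · rintro _ ⟨x, rfl⟩
    have hlip : max (ξ - y) 0 ≤ max (ξ - x) 0 + |x - y| := by
      have := abs_max_sub_max_le_abs (ξ - y) (ξ - x) 0
      rw [show ξ - y - (ξ - x) = x - y by ring] at this
      linarith [le_abs_self (max (ξ - y) 0 - max (ξ - x) 0)]
    have hκ₀ : 0 ≤ min 1 μ := le_min zero_le_one hμ
    calc min 1 μ * max (ξ - y) 0 ≤ min 1 μ * (max (ξ - x) 0 + |x - y|) := by gcongr
      _ = min 1 μ * |x - y| + min 1 μ * max (ξ - x) 0 := by ring
      _ ≤ 1 * |x - y| + μ * max (ξ - x) 0 := by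
        gcongr
        exacts [min_le_left _ _, min_le_right _ _]
      _ = |x - y| + μ * max (ξ - x) 0 := by ring

theorem Phi_eq_iSup (γ μ : ℝ) (g : ℝ → EReal) (ξ x : ℝ) :
    Phi γ μ g ξ x =
      ⨆ y, ((1 - γ : ℝ) : EReal) + g y - ((|x - y| + μ * max (ξ - x) 0 : ℝ) : EReal) := by
  rw [Phi, EReal.coe_add_iSup, EReal.iSup_sub_coe]
  congr 1 with y
  simp only [sub_eq_add_neg, ← EReal.coe_neg]
  simp only [neg_add, EReal.coe_add]
  abel

theorem iSup_Phi {μ : ℝ} (hμ : 0 ≤ μ) (γ : ℝ) (g : ℝ → EReal) (ξ : ℝ) :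
    ⨆ x, Phi γ μ g ξ x =
      ((1 - γ : ℝ) : EReal) + ⨆ y, g y - ((min 1 μ * max (ξ - y) 0 : ℝ) : EReal) := by
  simp only [Phi_eq_iSup, EReal.coe_add_iSup, ← add_sub_assoc]
  rw [iSup_comm]
  congr 1 with y
  exact EReal.iSup_sub_coe_of_isLeast (isLeast_abs_sub_add_mul_max_sub hμ ξ y)

theorem le_piE_iff {b : EReal} (hb : 0 ≤ b) (a : EReal) : b ≤ piE a ↔ b ≤ a := by
  unfold piE
  split_ifs with ha
  · rfl
  · exact iff_of_false (fun h => ha (hb.trans (h.trans bot_le))) fun h => ha (hb.trans h)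

theorem sFun_eq_sSup_iSup_Phi {γ μ : ℝ} (hγ : 0 ≤ γ) (hμ : 0 ≤ μ) (g : ℝ → EReal) :
    sFun γ μ g = sSup {ξ : ℝ | (γ : EReal) ≤ ⨆ x, Phi γ μ g ξ x} := by
  simp only [sFun, pFun, iSup_Phi hμ, le_piE_iff (EReal.coe_nonneg.2 hγ)]

theorem alternative_dynamic_general (γ μ : ℝ) (hγ : γ ∈ Set.Ioo (0 : ℝ) 1) (hμ : 0 < μ)
    (g0 : ℝ → EReal) :
    ∀ n : ℕ, 1 ≤ n →
      sFun γ μ (gseq γ μ g0 (n - 1)) =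
        sSup {ξ : ℝ | (γ : EReal) ≤ ⨆ x : ℝ, Phi γ μ (gseq γ μ g0 (n - 1)) ξ x} ∧
      gseq γ μ g0 n =
        fun x => piE (Phi γ μ (gseq γ μ g0 (n - 1))
          (sFun γ μ (gseq γ μ g0 (n - 1))) x) := by
  rintro (_ | m) h
  · omega
  exact ⟨sFun_eq_sSup_iSup_Phi hγ.1.le hμ.le _, rfl⟩

/-- if `sup g₀ = γ`, then for all `n ≥ 1`,
`s_n = sup{ ξ : sup_x Φ_ξ[g_{n−1}](x) ≥ γ }` and `g_n = π ∘ Φ_{s_n}[g_{n−1}]`. -/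
theorem alternative_dynamic (γ μ : ℝ) (hγ : γ ∈ Set.Ioo (0 : ℝ) 1) (hμ : 0 < μ)
    (g0 : ℝ → EReal) (hsup : (⨆ x : ℝ, g0 x) = (γ : EReal)) :
    ∀ n : ℕ, 1 ≤ n →
      sFun γ μ (gseq γ μ g0 (n - 1)) =
        sSup {ξ : ℝ | (γ : EReal) ≤ ⨆ x : ℝ, Phi γ μ (gseq γ μ g0 (n - 1)) ξ x} ∧
      gseq γ μ g0 n =
        fun x => piE (Phi γ μ (gseq γ μ g0 (n - 1))
          (sFun γ μ (gseq γ μ g0 (n - 1))) x) :=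
  alternative_dynamic_general γ μ hγ hμ g0
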